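/- arXiv:0906.4925 — 2 statements merged into one kernel-verified Lean document; each statement's English description precedes it below -/
import Mathlib

section
/- For any two special vertices x, y in the model space 𝔸, the segment seg(x,y) = {z ∈ 𝔸 : d(x,y) = d(x,z) + d(z,y)} equals the W̄T-convex hull of {x,y}, i.e. the intersection of all special half-apartments containing x and y. -/
/-- The co-root pairing `⟨x, α^∨⟩ = 2(x,α)/(α,α)`. -/
noncomputable def coPairing {V : Type*} [NormedAddCommGroup V] [InnerProductSpace ℝ V]
    (x α : V) : ℝ := 2 * (inner ℝ x α : ℝ) / (inner ℝ α α : ℝ)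

/-- The distance `d(x,y) = Σ_{α ∈ R⁺} |⟨y − x, α^∨⟩|` on the model space. -/
noncomputable def modelDist {V : Type*} [NormedAddCommGroup V] [InnerProductSpace ℝ V]
    (Rp : Finset V) (x y : V) : ℝ := ∑ α ∈ Rp, |coPairing (y - x) α|

/-- A special half-apartment: a half-space bounded by the hyperplane `H_{α,λ}` whose
associated affine reflection lies in `W̄T`, i.e. whose translation part `(2λ/(α,α))α`
belongs to the translation group `T`. -/
def IsSpecialHalf {V : Type*} [NormedAddCommGroup V] [InnerProductSpace ℝ V]
    (Rp : Finset V) (T : AddSubgroup V) (S : Set V) : Prop :=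
  ∃ α ∈ Rp, ∃ lam : ℝ, (2 * lam / (inner ℝ α α : ℝ)) • α ∈ T ∧
    (S = {z : V | ((inner ℝ α α : ℝ) / 2) * coPairing z α ≤ lam} ∨
     S = {z : V | lam ≤ ((inner ℝ α α : ℝ) / 2) * coPairing z α})

/-- A special vertex: a point lying, for each root `α`, on a special hyperplane parallel
to `H_{α,0}`. -/
def IsSpecialVertex {V : Type*} [NormedAddCommGroup V] [InnerProductSpace ℝ V]
    (Rp : Finset V) (T : AddSubgroup V) (x : V) : Prop :=
  ∀ α ∈ Rp, (coPairing x α) • α ∈ T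

/-! By the triangle inequality in each term `|⟨y - x, α^∨⟩|` of `d(x, y)`, `z` lies on the segment
iff `(z, α)` lies between `(x, α)` and `(y, α)` for every positive root `α`. Every half-space
`(·, α) ≤ λ` or `(·, α) ≥ λ` containing `x` and `y` contains such a `z`; conversely, since `x` and
`y` are special vertices, the half-spaces bounded by the hyperplanes through `x` and `y` orthogonal
to `α` are special, and they cut out exactly these constraints. -/

open Set

lemma abs_sub_eq_abs_sub_add_abs_sub_iff (a b c : ℝ) :
    |b - a| = |c - a| + |b - c| ↔ c ∈ uIcc a b := by
  have h := abs_add_eq_add_abs_iff (c - a) (b - c)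
  rw [sub_add_sub_cancel'] at h
  rw [h, mem_uIcc, sub_nonneg, sub_nonneg, sub_nonpos, sub_nonpos, and_comm (a := c ≤ a)]

section CoPairing

variable {V : Type*} [NormedAddCommGroup V] [InnerProductSpace ℝ V]

lemma coPairing_sub (u v α : V) : coPairing (u - v) α = coPairing u α - coPairing v α := by
  unfold coPairing
  rw [inner_sub_left, mul_sub, sub_div]

lemma coPairing_eq_inner_mul (w α : V) :
    coPairing w α = inner ℝ w α * (2 / inner ℝ α α) := by
  unfold coPairing
  ring

/-- At `α = 0` both sides vanish, because of the junk value `x / 0 = 0` in `coPairing`. -/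
lemma inner_self_div_two_mul_coPairing (w α : V) :
    inner ℝ α α / 2 * coPairing w α = inner ℝ w α := by
  rcases eq_or_ne α 0 with rfl | hα
  · simp
  · unfold coPairing
    field_simp [inner_self_ne_zero.mpr hα]

lemma mul_mem_uIcc_of_nonneg {a b t c : ℝ} (hc : 0 ≤ c) (ht : t ∈ uIcc a b) :
    c * t ∈ uIcc (c * a) (c * b) :=
  (monotone_mul_left_of_nonneg hc).image_uIcc_subset (mem_image_of_mem _ ht)

lemma coPairing_mem_uIcc_iff (x y z α : V) :
    coPairing z α ∈ uIcc (coPairing x α) (coPairing y α) ↔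
      inner ℝ z α ∈ uIcc (inner ℝ x α) (inner ℝ y α) := by
  have hα : (0 : ℝ) ≤ inner ℝ α α := real_inner_self_nonneg
  constructor
  · intro h
    simpa only [inner_self_div_two_mul_coPairing] using
      mul_mem_uIcc_of_nonneg (div_nonneg hα zero_le_two) h
  · intro h
    simpa only [coPairing_eq_inner_mul, mul_comm _ (2 / inner ℝ α α)] using
      mul_mem_uIcc_of_nonneg (div_nonneg zero_le_two hα) h

lemma modelDist_eq_add_iff (Rp : Finset V) (x y z : V) :
    modelDist Rp x y = modelDist Rp x z + modelDist Rp z y ↔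
      ∀ α ∈ Rp, inner ℝ z α ∈ uIcc (inner ℝ x α) (inner ℝ y α) := by
  have triangle : ∀ α ∈ Rp,
      |coPairing (y - x) α| ≤ |coPairing (z - x) α| + |coPairing (y - z) α| := by
    intro α _
    rw [coPairing_sub, coPairing_sub, coPairing_sub, add_comm]
    exact abs_sub_le _ _ _
  unfold modelDist
  rw [← Finset.sum_add_distrib, Finset.sum_eq_sum_iff_of_le triangle]
  refine forall₂_congr fun α _ => ?_
  rw [coPairing_sub, coPairing_sub, coPairing_sub, abs_sub_eq_abs_sub_add_abs_sub_iff,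
    coPairing_mem_uIcc_iff]

end CoPairing

section SpecialHalf

variable {V : Type*} [NormedAddCommGroup V] [InnerProductSpace ℝ V] {Rp : Finset V}
  {T : AddSubgroup V}

lemma IsSpecialHalf.exists_eq_preimage {S : Set V} (hS : IsSpecialHalf Rp T S) :
    ∃ α ∈ Rp, ∃ lam : ℝ,
      S = (inner ℝ · α) ⁻¹' Iic lam ∨ S = (inner ℝ · α) ⁻¹' Ici lam := by
  obtain ⟨α, hα, lam, -, hS⟩ := hS
  simp only [inner_self_div_two_mul_coPairing] at hS
  exact ⟨α, hα, lam, hS⟩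

lemma IsSpecialHalf.mem_of_inner_mem_uIcc {S : Set V} (hS : IsSpecialHalf Rp T S)
    {x y z : V} (hx : x ∈ S) (hy : y ∈ S)
    (hz : ∀ α ∈ Rp, inner ℝ z α ∈ uIcc (inner ℝ x α) (inner ℝ y α)) : z ∈ S := by
  obtain ⟨α, hα, lam, rfl | rfl⟩ := hS.exists_eq_preimage
  · exact ordConnected_Iic.uIcc_subset hx hy (hz α hα)
  · exact ordConnected_Ici.uIcc_subset hx hy (hz α hα)

lemma IsSpecialVertex.isSpecialHalf_inner_le {x : V} (hx : IsSpecialVertex Rp T x) {α : V}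
    (hα : α ∈ Rp) : IsSpecialHalf Rp T {z | inner ℝ z α ≤ inner ℝ x α} :=
  ⟨α, hα, inner ℝ x α, hx α hα, Or.inl (by simp only [inner_self_div_two_mul_coPairing])⟩

lemma IsSpecialVertex.isSpecialHalf_le_inner {x : V} (hx : IsSpecialVertex Rp T x) {α : V}
    (hα : α ∈ Rp) : IsSpecialHalf Rp T {z | inner ℝ x α ≤ inner ℝ z α} :=
  ⟨α, hα, inner ℝ x α, hx α hα, Or.inr (by simp only [inner_self_div_two_mul_coPairing])⟩

lemma inner_mem_Icc_of_forall_isSpecialHalf {x y z : V} (hx : IsSpecialVertex Rp T x)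
    (hy : IsSpecialVertex Rp T y) {α : V} (hα : α ∈ Rp) (hxy : inner ℝ x α ≤ inner ℝ y α)
    (hz : ∀ S, IsSpecialHalf Rp T S → x ∈ S → y ∈ S → z ∈ S) :
    inner ℝ z α ∈ Icc (inner ℝ x α) (inner ℝ y α) :=
  ⟨hz _ (hx.isSpecialHalf_le_inner hα) (le_refl (inner ℝ x α)) hxy,
    hz _ (hy.isSpecialHalf_inner_le hα) hxy (le_refl (inner ℝ y α))⟩

lemma sInter_isSpecialHalf_eq {x y : V} (hx : IsSpecialVertex Rp T x)
    (hy : IsSpecialVertex Rp T y) :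
    ⋂₀ {S : Set V | IsSpecialHalf Rp T S ∧ x ∈ S ∧ y ∈ S} =
      {z | ∀ α ∈ Rp, inner ℝ z α ∈ uIcc (inner ℝ x α) (inner ℝ y α)} := by
  ext z
  simp only [mem_sInter, mem_ofPred_eq, and_imp]
  refine ⟨fun hz α hα => ?_, fun hz S hS hxS hyS => hS.mem_of_inner_mem_uIcc hxS hyS hz⟩
  rcases le_total (inner ℝ x α) (inner ℝ y α) with hxy | hyx
  · rw [uIcc_of_le hxy]
    exact inner_mem_Icc_of_forall_isSpecialHalf hx hy hα hxy hz
  · rw [uIcc_of_ge hyx]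
    exact inner_mem_Icc_of_forall_isSpecialHalf hy hx hα hyx fun S hS hyS hxS => hz S hS hxS hyS

end SpecialHalf

theorem stmt9_general {V : Type*} [NormedAddCommGroup V] [InnerProductSpace ℝ V]
    (Rp : Finset V)
    (T : AddSubgroup V) (x y : V)
    (hx : IsSpecialVertex Rp T x) (hy : IsSpecialVertex Rp T y) :
    {z : V | modelDist Rp x y = modelDist Rp x z + modelDist Rp z y} =
      ⋂₀ {S : Set V | IsSpecialHalf Rp T S ∧ x ∈ S ∧ y ∈ S} := by
  rw [sInter_isSpecialHalf_eq hx hy]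
  exact Set.ext fun z => modelDist_eq_add_iff Rp x y z

/-- for special vertices `x, y` of the model space, the segment
`seg(x,y) = {z : d(x,y) = d(x,z) + d(z,y)}` equals the `W̄T`-convex hull of `{x,y}`,
the intersection of all special half-apartments containing `x` and `y`. -/
theorem stmt9 {V : Type*} [NormedAddCommGroup V] [InnerProductSpace ℝ V]
    (Rp : Finset V) (h0 : ∀ α ∈ Rp, α ≠ 0)
    (hspan : Submodule.span ℝ (Rp : Set V) = ⊤)
    (T : AddSubgroup V) (x y : V)
    (hx : IsSpecialVertex Rp T x) (hy : IsSpecialVertex Rp T y) :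
    {z : V | modelDist Rp x y = modelDist Rp x z + modelDist Rp z y} =
      ⋂₀ {S : Set V | IsSpecialHalf Rp T S ∧ x ∈ S ∧ y ∈ S} :=
  stmt9_general Rp T x y hx hy
end

section
/- In the rank-one case (Λ-tree X thick with respect to W̄T, apartment A ≅ Λ with origin 0 and x a special vertex): the image under the retraction ρ centered at the end ∂(−C_f) of the preimage r⁻¹(W̄·x) under the retraction r centered at the germ of C_f at 0 equals conv(W̄·x) ∩ (x + T), i.e. ρ(r⁻¹({x,−x})) = {y ∈ [−|x|, |x|] : y − x ∈ 2T'} for the appropriate translation subgroup. -/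
/-!
A point `z` of the tree is recorded by its foot `m = μ z` on the apartment and its height
`h = d(e m, z)`; thickness says that exactly the pairs with `h = 0`, or with `h > 0` and `m`
special, occur. Then `r z = m ± h` and `ρ z = m + h`. If `r z = v ∈ {x, -x}` with `m > 0`,
then `ρ z = v`. If `m ≤ 0`, then `ρ z = v + 2h` lies between `v` and `2m - v ≤ -v`, and
differs from `x` by `2m - (v + x) ∈ T`. Conversely `y` is `ρ` of the point of height
`(y + |x|)/2` branching off at the special point `(y - |x|)/2 ≤ 0`, whose `r`-image is `-|x|`.
-/

section Profiles

variable {Λ : Type*} [AddCommGroup Λ] [LinearOrder Λ] [IsOrderedAddMonoid Λ]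

/-- The pairs (foot, height) of points of a tree branching fully at the points `t` with
`t + t ∈ T`, and only there. -/
def realizablePairs (T : AddSubgroup Λ) : Set (Λ × Λ) :=
  {p | 0 ≤ p.2 ∧ (0 < p.2 → p.1 + p.1 ∈ T)}

lemma mem_convex_coset_of_eq_or_eq_neg {T : AddSubgroup Λ} {x v : Λ} (hx : x + x ∈ T)
    (hv : v = x ∨ v = -x) : -|x| ≤ v ∧ v ≤ |x| ∧ v - x ∈ T := by
  rcases hv with rfl | rfl
  · exact ⟨neg_abs_le v, le_abs_self v, by simp⟩
  · refine ⟨neg_le_neg (le_abs_self x), neg_le_abs x, ?_⟩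
    rw [show -x - x = -(x + x) by abel]
    exact T.neg_mem hx

lemma add_mem_convex_coset_of_sub_eq {T : AddSubgroup Λ} {x v m h : Λ} (hx : x + x ∈ T)
    (hv : v = x ∨ v = -x) (hp : (m, h) ∈ realizablePairs T) (hm : m ≤ 0) (hmh : m - h = v) :
    -|x| ≤ m + h ∧ m + h ≤ |x| ∧ m + h - x ∈ T := by
  obtain ⟨hv_low, hv_high, hvT⟩ := mem_convex_coset_of_eq_or_eq_neg hx hv
  obtain ⟨hh, hbranch⟩ := hp
  refine ⟨?_, ?_, ?_⟩
  · calc -|x| ≤ m - h := hmh ▸ hv_low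
      _ ≤ m + h := (sub_le_self m hh).trans (le_add_of_nonneg_right hh)
  · calc m + h = m + m - v := by rw [← hmh]; abel
      _ ≤ 0 - v := sub_le_sub_right (add_nonpos hm hm) v
      _ ≤ |x| := by rw [zero_sub]; exact neg_le.mpr hv_low
  · rcases hh.eq_or_lt with rfl | hpos
    · simpa [← hmh] using hvT
    · rw [show m + h - x = (m + m) - ((v - x) + (x + x)) by rw [← hmh]; abel]
      exact T.sub_mem (hbranch hpos) (T.add_mem hvT hx)

/-- The set `ρ(r⁻¹{x, -x})`, computed on (foot, height) pairs. -/
lemma image_add_retract_preimage (T : AddSubgroup Λ) (x : Λ) (hdiv : ∀ a : Λ, ∃ b : Λ, b + b = a) (hx : x + x ∈ T) :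
    (fun p : Λ × Λ => p.1 + p.2) ''
        ({p | ∃ v : Λ, (v = x ∨ v = -x) ∧
          ((0 < p.1 ∧ p.1 + p.2 = v) ∨ (p.1 ≤ 0 ∧ p.1 - p.2 = v))} ∩ realizablePairs T) =
      {y : Λ | -|x| ≤ y ∧ y ≤ |x| ∧ y - x ∈ T} := by
  ext y
  constructor
  · rintro ⟨⟨m, h⟩, ⟨⟨v, hv, ⟨-, hmh⟩ | ⟨hm, hmh⟩⟩, hp⟩, rfl⟩
    · dsimp only at hmh ⊢
      rw [hmh]
      exact mem_convex_coset_of_eq_or_eq_neg hx hv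
    · exact add_mem_convex_coset_of_sub_eq hx hv hp hm hmh
  · rintro ⟨hy_low, hy_high, hyT⟩
    obtain ⟨b, hb⟩ := hdiv (y - |x|)
    have hc : (y - b) + (y - b) = y + |x| := by
      rw [show (y - b) + (y - b) = (y + y) - (b + b) by abel, hb]; abel
    have hb_nonpos : b ≤ 0 := add_self_nonpos_iff.mp (hb ▸ sub_nonpos.mpr hy_high)
    have hc_nonneg : 0 ≤ y - b := nonneg_add_self_iff.mp (hc ▸ neg_le_iff_add_nonneg.mp hy_low)
    have hneg : -|x| = x ∨ -|x| = -x := by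
      rcases abs_choice x with h | h <;> simp [h]
    have hbT : b + b ∈ T := by
      rw [hb, show y - |x| = (y - x) + (x + -|x|) by abel]
      exact T.add_mem hyT (by rcases hneg with h | h <;> simp [h, hx])
    refine ⟨(b, y - b), ⟨⟨-|x|, hneg, Or.inr ⟨hb_nonpos, ?_⟩⟩, hc_nonneg, fun _ => hbT⟩, ?_⟩
    · rw [show b - (y - b) = (b + b) - y by abel, hb]; abel
    · simp

end Profiles

section Tree

variable {Λ X : Type*} [AddCommGroup Λ] [LinearOrder Λ] [IsOrderedAddMonoid Λ]
  {d : X → X → Λ}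

lemma dist_nonneg_of_triangle (hself : ∀ a, d a a = 0) (hsymm : ∀ a b, d a b = d b a)
    (htri : ∀ a b c, d a b ≤ d a c + d c b) (a b : X) : 0 ≤ d a b := by
  have := htri a a b
  rw [hself, hsymm b a] at this
  exact nonneg_add_self_iff.mp this

variable {e : Λ → X} {μ : X → Λ}

lemma foot_apartment (hself : ∀ a, d a a = 0) (hnonneg : ∀ a b, 0 ≤ d a b)
    (hμ : ∀ (z : X) (t : Λ), d (e t) z = |t - μ z| + d (e (μ z)) z) (t : Λ) : μ (e t) = t ∧ d (e (μ (e t))) (e t) = 0 := by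
  have h := hμ (e t) t
  rw [hself, eq_comm, add_eq_zero_iff_of_nonneg (abs_nonneg _) (hnonneg _ _), abs_eq_zero,
    sub_eq_zero] at h
  exact ⟨h.1.symm, h.2⟩

lemma range_foot_height_eq_realizablePairs (T : AddSubgroup Λ)
    (hself : ∀ a, d a a = 0) (hsymm : ∀ a b, d a b = d b a)
    (htri : ∀ a b c, d a b ≤ d a c + d c b)
    (hμ : ∀ (z : X) (t : Λ), d (e t) z = |t - μ z| + d (e (μ z)) z)
    (hthick : ∀ t h : Λ, t + t ∈ T → 0 < h → ∃ z : X, μ z = t ∧ d (e (μ z)) z = h)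
    (hbranch : ∀ z : X, 0 < d (e (μ z)) z → μ z + μ z ∈ T) :
    Set.range (fun z => (μ z, d (e (μ z)) z)) = realizablePairs T := by
  have hnonneg := dist_nonneg_of_triangle hself hsymm htri
  ext ⟨m, h⟩
  constructor
  · rintro ⟨z, hz⟩
    obtain ⟨rfl, rfl⟩ := Prod.mk.inj hz
    exact ⟨hnonneg _ _, hbranch z⟩
  · rintro ⟨hh, hmT⟩
    rcases hh.eq_or_lt with rfl | hpos
    · obtain ⟨hfoot, hheight⟩ := foot_apartment hself hnonneg hμ m
      exact ⟨e m, Prod.ext hfoot hheight⟩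
    · obtain ⟨z, hfoot, hheight⟩ := hthick m h (hmT hpos) hpos
      exact ⟨z, Prod.ext hfoot hheight⟩

end Tree

theorem stmt18_general {Λ X : Type*} [AddCommGroup Λ] [LinearOrder Λ] [IsOrderedAddMonoid Λ]
    (d : X → X → Λ)
    (hzero : ∀ a b, d a b = 0 ↔ a = b)
    (hsymm : ∀ a b, d a b = d b a)
    (htri : ∀ a b c, d a b ≤ d a c + d c b)
    -- the apartment `A = e(Λ)`
    (e : Λ → X)
    -- the attaching point `μ z` of `z` to the apartment
    (μ : X → Λ)
    (hμ : ∀ (z : X) (t : Λ), d (e t) z = |t - μ z| + d (e (μ z)) z)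
    -- `Λ` is `2`-divisible (it is a module over a subfield of `ℝ`)
    (hdiv : ∀ a : Λ, ∃ b : Λ, b + b = a)
    -- the translation group `T`; thickness: the tree branches fully at every special
    -- point, and only at special points
    (T : AddSubgroup Λ)
    (hthick : ∀ t h : Λ, t + t ∈ T → 0 < h → ∃ z : X, μ z = t ∧ d (e (μ z)) z = h)
    (hbranch : ∀ z : X, 0 < d (e (μ z)) z → μ z + μ z ∈ T)
    -- `x` is a special vertex
    (x : Λ) (hx : x + x ∈ T) :
    (fun z : X => μ z + d (e (μ z)) z) ''
        {z : X | ∃ v : Λ, (v = x ∨ v = -x) ∧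
          ((0 < μ z ∧ μ z + d (e (μ z)) z = v) ∨
           (μ z ≤ 0 ∧ μ z - d (e (μ z)) z = v))} =
      {y : Λ | -|x| ≤ y ∧ y ≤ |x| ∧ y - x ∈ T} := by
  have hrange := range_foot_height_eq_realizablePairs T (fun a => (hzero a a).2 rfl) hsymm htri
    hμ hthick hbranch
  rw [← image_add_retract_preimage T x hdiv hx, ← hrange, ← Set.image_preimage_eq_inter_range,
    Set.image_image]
  rfl

/-- rank-one convexity theorem. `X` is a thick `Λ`-tree with a distinguished
apartment `A` given by an isometric embedding `e : Λ → X`; every point `z` of `X` attaches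
to `A` at the point `e (μ z)` (so that `d(e t, z) = |t − μ z| + d(e (μ z), z)` for all
`t`), the tree branches exactly at the special points (those `t` with `t + t ∈ T`, i.e.
fixed points of reflections in `W̄T`), and branches fully there. The retraction `r`
centered at the germ of the positive ray at `0` sends `z` to `±d(0,z)` according to the
initial direction of `[0,z]`, and the retraction `ρ` centered at the negative end sends
`z` to `μ z + d(e (μ z), z)`. Then for a special vertex `x`,
`ρ(r⁻¹(W̄·x)) = conv(W̄·x) ∩ (x + T) = {y ∈ [−|x|,|x|] : y − x ∈ T}`. -/
theorem stmt18 {Λ X : Type*} [AddCommGroup Λ] [LinearOrder Λ] [IsOrderedAddMonoid Λ]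
    (d : X → X → Λ)
    (hzero : ∀ a b, d a b = 0 ↔ a = b)
    (hsymm : ∀ a b, d a b = d b a)
    (htri : ∀ a b c, d a b ≤ d a c + d c b)
    -- the apartment `A = e(Λ)`
    (e : Λ → X) (hiso : ∀ s t : Λ, d (e s) (e t) = |t - s|)
    -- the attaching point `μ z` of `z` to the apartment
    (μ : X → Λ)
    (hμ : ∀ (z : X) (t : Λ), d (e t) z = |t - μ z| + d (e (μ z)) z)
    -- `Λ` is `2`-divisible (it is a module over a subfield of `ℝ`)
    (hdiv : ∀ a : Λ, ∃ b : Λ, b + b = a)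
    -- the translation group `T`; thickness: the tree branches fully at every special
    -- point, and only at special points
    (T : AddSubgroup Λ)
    (hthick : ∀ t h : Λ, t + t ∈ T → 0 < h → ∃ z : X, μ z = t ∧ d (e (μ z)) z = h)
    (hbranch : ∀ z : X, 0 < d (e (μ z)) z → μ z + μ z ∈ T)
    -- `x` is a special vertex
    (x : Λ) (hx : x + x ∈ T) :
    (fun z : X => μ z + d (e (μ z)) z) ''
        {z : X | ∃ v : Λ, (v = x ∨ v = -x) ∧
          ((0 < μ z ∧ μ z + d (e (μ z)) z = v) ∨
           (μ z ≤ 0 ∧ μ z - d (e (μ z)) z = v))} =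
      {y : Λ | -|x| ≤ y ∧ y ≤ |x| ∧ y - x ∈ T} :=
  stmt18_general d hzero hsymm htri e μ hμ hdiv T hthick hbranch x hx
end
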